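/- arXiv:math/0206161 — 2 statements merged into one kernel-verified Lean document; each statement's English description precedes it below -/
import Mathlib

section
/- For every integer n > 0 there exists a semialgebraic function h : P_n → ℚ_p such that |h(t)| = |t|^{1/n} for every t ∈ P_n (equivalently, v(h(t)) = v(t)/n for every t ∈ P_n). -/
open Filter MeasureTheory
open scoped ENNReal

namespace PadicSub

variable (p : ℕ) [Fact p.Prime]

/-- The coefficients (indexed by multi-indices) of a restricted power series:
they tend to `0` along the cofinite filter. -/
def IsRestrictedCoeffs {m : ℕ} (a : (Fin m → ℕ) → ℚ_[p]) : Prop :=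
  Filter.Tendsto a Filter.cofinite (nhds 0)

/-- The restricted analytic function associated to a family of coefficients:
the sum of the power series on `ℤ_p^m`, and `0` outside `ℤ_p^m`. -/
noncomputable def ranalFn {m : ℕ} (a : (Fin m → ℕ) → ℚ_[p]) (x : Fin m → ℚ_[p]) : ℚ_[p] :=
  if ∀ j, ‖x j‖ ≤ 1 then ∑' i : (Fin m → ℕ), a i * ∏ j, x j ^ i j else 0

/-- `D`-functions: the functions obtained from restricted analytic functions, polynomial
maps, and the inverse function (with the convention `0⁻¹ = 0`) by repeated composition. -/
inductive IsDFunction : {m : ℕ} → ((Fin m → ℚ_[p]) → ℚ_[p]) → Prop where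
  | ranal {m : ℕ} (a : (Fin m → ℕ) → ℚ_[p]) (ha : IsRestrictedCoeffs p a) :
      IsDFunction (ranalFn p a)
  | poly {m : ℕ} (q : MvPolynomial (Fin m) ℚ_[p]) :
      IsDFunction (fun x => MvPolynomial.eval x q)
  | inv : IsDFunction (fun x : Fin 1 → ℚ_[p] => (x 0)⁻¹)
  | comp {m n : ℕ} (f : (Fin n → ℚ_[p]) → ℚ_[p]) (g : Fin n → (Fin m → ℚ_[p]) → ℚ_[p]) :
      IsDFunction f → (∀ i, IsDFunction (g i)) →
      IsDFunction (fun x => f (fun i => g i x))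

/-- `P_n`: the set of nonzero `n`-th powers in `ℚ_p`. -/
def Pset (n : ℕ) : Set ℚ_[p] := {x | ∃ y : ℚ_[p], y ≠ 0 ∧ y ^ n = x}

/-- The coset `μ P_n`. -/
def cosetP (μ : ℚ_[p]) (n : ℕ) : Set ℚ_[p] := {x | ∃ y ∈ Pset p n, x = μ * y}

/-- A (globally) subanalytic subset of `ℚ_p^m`: a finite union of finite intersections of
sets of the form `{x | f x = 0}` and `{x | f x ∈ P_n}`, `f` a `D`-function, `n > 0`. -/
def IsSubanalytic {m : ℕ} (X : Set (Fin m → ℚ_[p])) : Prop :=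
  ∃ (r s : ℕ) (F : Fin r → Fin s → Set (Fin m → ℚ_[p])),
    (∀ i j, (∃ f, IsDFunction p f ∧ F i j = {x | f x = 0}) ∨
            (∃ f n, IsDFunction p f ∧ 0 < n ∧ F i j = {x | f x ∈ Pset p n})) ∧
    X = ⋃ i, ⋂ j, F i j

/-- A semialgebraic subset of `ℚ_p^m`: a finite union of finite intersections of
sets of the form `{x | f x = 0}` and `{x | f x ∈ P_n}`, `f` a polynomial, `n > 0`. -/
def IsSemialgebraic {m : ℕ} (X : Set (Fin m → ℚ_[p])) : Prop :=
  ∃ (r s : ℕ) (F : Fin r → Fin s → Set (Fin m → ℚ_[p])),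
    (∀ i j, (∃ f : MvPolynomial (Fin m) ℚ_[p], F i j = {x | MvPolynomial.eval x f = 0}) ∨
            (∃ (f : MvPolynomial (Fin m) ℚ_[p]) (n : ℕ), 0 < n ∧
              F i j = {x | MvPolynomial.eval x f ∈ Pset p n})) ∧
    X = ⋃ i, ⋂ j, F i j

/-- The graph of the restriction to `X` of a map `ℚ_p^m → ℚ_p^n`, inside `ℚ_p^(m+n)`. -/
def graphMap {m n : ℕ} (X : Set (Fin m → ℚ_[p])) (F : (Fin m → ℚ_[p]) → (Fin n → ℚ_[p])) :
    Set (Fin (m + n) → ℚ_[p]) :=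
  {z | (fun i => z (Fin.castAdd n i)) ∈ X ∧
    F (fun i => z (Fin.castAdd n i)) = fun j => z (Fin.natAdd m j)}

/-- The graph of the restriction to `X` of a function `ℚ_p^m → ℚ_p`, inside `ℚ_p^(m+1)`. -/
def graphFun {m : ℕ} (X : Set (Fin m → ℚ_[p])) (f : (Fin m → ℚ_[p]) → ℚ_[p]) :
    Set (Fin (m + 1) → ℚ_[p]) :=
  {z | (fun i : Fin m => z i.castSucc) ∈ X ∧ f (fun i : Fin m => z i.castSucc) = z (Fin.last m)}

/-- A function `ℚ_p^m → ℚ_p` is subanalytic on `X` if its graph over `X` is subanalytic. -/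
def IsSubanalyticFnOn {m : ℕ} (X : Set (Fin m → ℚ_[p])) (f : (Fin m → ℚ_[p]) → ℚ_[p]) : Prop :=
  IsSubanalytic p (graphFun p X f)

/-- A (totally defined) subanalytic function `ℚ_p^m → ℚ_p`. -/
def IsSubanalyticFn {m : ℕ} (f : (Fin m → ℚ_[p]) → ℚ_[p]) : Prop :=
  IsSubanalyticFnOn p Set.univ f

/-- A function `ℚ_p^m → ℚ_p` is semialgebraic on `X` if its graph over `X` is
semialgebraic. -/
def IsSemialgebraicFnOn {m : ℕ} (X : Set (Fin m → ℚ_[p])) (f : (Fin m → ℚ_[p]) → ℚ_[p]) :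
    Prop :=
  IsSemialgebraic p (graphFun p X f)

/-- A subanalytic subset of `ℚ_p` (one-variable version). -/
def IsSubanalytic1 (X : Set ℚ_[p]) : Prop :=
  IsSubanalytic p {z : Fin 1 → ℚ_[p] | z 0 ∈ X}

/-- A semialgebraic subset of `ℚ_p` (one-variable version). -/
def IsSemialgebraic1 (X : Set ℚ_[p]) : Prop :=
  IsSemialgebraic p {z : Fin 1 → ℚ_[p] | z 0 ∈ X}

/-- A function `ℚ_p → ℚ_p` subanalytic on `X ⊆ ℚ_p`: its graph over `X` is a subanalytic
subset of `ℚ_p²`. -/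
def IsSubanalyticFnOn1 (X : Set ℚ_[p]) (f : ℚ_[p] → ℚ_[p]) : Prop :=
  IsSubanalytic p {z : Fin 2 → ℚ_[p] | z 0 ∈ X ∧ f (z 0) = z 1}

/-- A function `ℚ_p → ℚ_p` semialgebraic on `X ⊆ ℚ_p`: its graph over `X` is a
semialgebraic subset of `ℚ_p²`. -/
def IsSemialgebraicFnOn1 (X : Set ℚ_[p]) (f : ℚ_[p] → ℚ_[p]) : Prop :=
  IsSemialgebraic p {z : Fin 2 → ℚ_[p] | z 0 ∈ X ∧ f (z 0) = z 1}

/-- Interpretation of the symbols `□ᵢ` in the definition of cells: `true` means `<` and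
`false` means "no condition". -/
def sqRel (b : Bool) (x y : ℝ) : Prop := b = true → x < y

/-- A cell in `ℚ_p`, presented with its center `γ` and coset data `μ`, `n`. -/
def IsCell1 (A : Set ℚ_[p]) (γ μ : ℚ_[p]) (n : ℕ) : Prop :=
  0 < n ∧ A.Nonempty ∧
  ∃ (α β : ℚ_[p]) (b₁ b₂ : Bool), α ≠ 0 ∧ β ≠ 0 ∧
    A = {t | sqRel b₁ ‖α‖ ‖t - γ‖ ∧ sqRel b₂ ‖t - γ‖ ‖β‖ ∧ t - γ ∈ cosetP p μ n}

/-- Subanalytic cells in `ℚ_p^(m+1)`, defined inductively, presented with their center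
`γ : ℚ_p^m → ℚ_p` and coset data `μ`, `n`.  The projection of the cell onto the first `m`
coordinates is required to be a cell. -/
inductive IsCell : {m : ℕ} → Set (Fin (m + 1) → ℚ_[p]) →
    ((Fin m → ℚ_[p]) → ℚ_[p]) → ℚ_[p] → ℕ → Prop where
  | base (n : ℕ) (hn : 0 < n) (μ γ0 α β : ℚ_[p]) (hα : α ≠ 0) (hβ : β ≠ 0)
      (b₁ b₂ : Bool) (A : Set (Fin 1 → ℚ_[p])) (hne : A.Nonempty)
      (hA : A = {z | sqRel b₁ ‖α‖ ‖z 0 - γ0‖ ∧ sqRel b₂ ‖z 0 - γ0‖ ‖β‖ ∧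
        z 0 - γ0 ∈ cosetP p μ n}) :
      IsCell A (fun _ => γ0) μ n
  | succ {m : ℕ} {D : Set (Fin (m + 1) → ℚ_[p])} {γD : (Fin m → ℚ_[p]) → ℚ_[p]}
      {μD : ℚ_[p]} {nD : ℕ} (hD : IsCell D γD μD nD)
      (n : ℕ) (hn : 0 < n) (μ : ℚ_[p]) (α β γ : (Fin (m + 1) → ℚ_[p]) → ℚ_[p])
      (hα : IsSubanalyticFn p α) (hβ : IsSubanalyticFn p β) (hγ : IsSubanalyticFn p γ)
      (hα0 : ∀ x, α x ≠ 0) (hβ0 : ∀ x, β x ≠ 0)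
      (b₁ b₂ : Bool) (A : Set (Fin (m + 2) → ℚ_[p]))
      (hA : A = {z | (fun i : Fin (m + 1) => z i.castSucc) ∈ D ∧
          sqRel b₁ ‖α (fun i : Fin (m + 1) => z i.castSucc)‖
            ‖z (Fin.last (m + 1)) - γ (fun i : Fin (m + 1) => z i.castSucc)‖ ∧
          sqRel b₂ ‖z (Fin.last (m + 1)) - γ (fun i : Fin (m + 1) => z i.castSucc)‖
            ‖β (fun i : Fin (m + 1) => z i.castSucc)‖ ∧
          z (Fin.last (m + 1)) - γ (fun i : Fin (m + 1) => z i.castSucc) ∈ cosetP p μ n})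
      (hproj : (fun (z : Fin (m + 2) → ℚ_[p]) (i : Fin (m + 1)) => z i.castSucc) '' A = D) :
      IsCell A γ μ n

/-- Analytic cells in `ℚ_p^(m+1)`: as subanalytic cells, but at each stage of the inductive
definition the functions `α`, `β`, `γ` are moreover analytic on the projection of the cell. -/
inductive IsAnalyticCell : {m : ℕ} → Set (Fin (m + 1) → ℚ_[p]) →
    ((Fin m → ℚ_[p]) → ℚ_[p]) → ℚ_[p] → ℕ → Prop where
  | base (n : ℕ) (hn : 0 < n) (μ γ0 α β : ℚ_[p]) (hα : α ≠ 0) (hβ : β ≠ 0)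
      (b₁ b₂ : Bool) (A : Set (Fin 1 → ℚ_[p])) (hne : A.Nonempty)
      (hA : A = {z | sqRel b₁ ‖α‖ ‖z 0 - γ0‖ ∧ sqRel b₂ ‖z 0 - γ0‖ ‖β‖ ∧
        z 0 - γ0 ∈ cosetP p μ n}) :
      IsAnalyticCell A (fun _ => γ0) μ n
  | succ {m : ℕ} {D : Set (Fin (m + 1) → ℚ_[p])} {γD : (Fin m → ℚ_[p]) → ℚ_[p]}
      {μD : ℚ_[p]} {nD : ℕ} (hD : IsAnalyticCell D γD μD nD)
      (n : ℕ) (hn : 0 < n) (μ : ℚ_[p]) (α β γ : (Fin (m + 1) → ℚ_[p]) → ℚ_[p])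
      (hα : IsSubanalyticFn p α) (hβ : IsSubanalyticFn p β) (hγ : IsSubanalyticFn p γ)
      (hαan : AnalyticOn ℚ_[p] α D) (hβan : AnalyticOn ℚ_[p] β D)
      (hγan : AnalyticOn ℚ_[p] γ D)
      (hα0 : ∀ x, α x ≠ 0) (hβ0 : ∀ x, β x ≠ 0)
      (b₁ b₂ : Bool) (A : Set (Fin (m + 2) → ℚ_[p]))
      (hA : A = {z | (fun i : Fin (m + 1) => z i.castSucc) ∈ D ∧
          sqRel b₁ ‖α (fun i : Fin (m + 1) => z i.castSucc)‖
            ‖z (Fin.last (m + 1)) - γ (fun i : Fin (m + 1) => z i.castSucc)‖ ∧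
          sqRel b₂ ‖z (Fin.last (m + 1)) - γ (fun i : Fin (m + 1) => z i.castSucc)‖
            ‖β (fun i : Fin (m + 1) => z i.castSucc)‖ ∧
          z (Fin.last (m + 1)) - γ (fun i : Fin (m + 1) => z i.castSucc) ∈ cosetP p μ n})
      (hproj : (fun (z : Fin (m + 2) → ℚ_[p]) (i : Fin (m + 1)) => z i.castSucc) '' A = D) :
      IsAnalyticCell A γ μ n

/-- Generators of the algebra of subanalytic constructible functions on `ℚ_p^m`:
`ℤ`-valued valuations of nonvanishing subanalytic functions, and (`ℚ`-valued) norms of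
subanalytic functions. -/
def constructibleGens (m : ℕ) : Set ((Fin m → ℚ_[p]) → ℚ) :=
  {g | ∃ h : (Fin m → ℚ_[p]) → ℚ_[p], IsSubanalyticFn p h ∧ (∀ x, h x ≠ 0) ∧
        g = fun x => ((h x).valuation : ℚ)} ∪
  {g | ∃ h : (Fin m → ℚ_[p]) → ℚ_[p], IsSubanalyticFn p h ∧
        g = fun x => (padicNormE (h x) : ℚ)}

/-- The `ℚ`-algebra `C(ℚ_p^m)` of subanalytic constructible functions on `ℚ_p^m`. -/
noncomputable def ConstructibleAlg (m : ℕ) : Subalgebra ℚ ((Fin m → ℚ_[p]) → ℚ) :=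
  Algebra.adjoin ℚ (constructibleGens p m)

/-- `ℤ_p^m` as a subset of `ℚ_p^m`. -/
def ZpSet (m : ℕ) : Set (Fin m → ℚ_[p]) := {x | ∀ j, ‖x j‖ ≤ 1}

/-- A simple subset of `ℤ^n × ℚ_p^m`. -/
def IsSimpleSet (n m : ℕ) (A : Set ((Fin n → ℤ) × (Fin m → ℚ_[p]))) : Prop :=
  IsSubanalytic p {z : Fin (n + m) → ℚ_[p] |
    (∀ i : Fin n, z (Fin.castAdd m i) ≠ 0) ∧
    ((fun i : Fin n => (z (Fin.castAdd m i)).valuation),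
      fun j : Fin m => z (Fin.natAdd n j)) ∈ A}

/-- A simple function `ℤ^n × ℚ_p^m → ℤ`: one whose graph is a simple set. -/
def IsSimpleFn (n m : ℕ) (h : (Fin n → ℤ) × (Fin m → ℚ_[p]) → ℤ) : Prop :=
  IsSimpleSet p (n + 1) m
    {w | w.1 (Fin.last n) = h (fun i : Fin n => w.1 i.castSucc, w.2)}

/-- Generators of `C_simple(ℤ^n × ℚ_p^m)`: simple functions, and `p^h` for `h` simple. -/
def simpleGens (n m : ℕ) : Set ((Fin n → ℤ) × (Fin m → ℚ_[p]) → ℚ) :=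
  {g | ∃ h, IsSimpleFn p n m h ∧ g = fun w => (h w : ℚ)} ∪
  {g | ∃ h, IsSimpleFn p n m h ∧ g = fun w => (p : ℚ) ^ (h w)}

/-- The `ℚ`-algebra `C_simple(ℤ^n × ℚ_p^m)`. -/
noncomputable def SimpleAlg (n m : ℕ) : Subalgebra ℚ ((Fin n → ℤ) × (Fin m → ℚ_[p]) → ℚ) :=
  Algebra.adjoin ℚ (simpleGens p n m)

noncomputable instance : MeasurableSpace ℚ_[p] := borel _
instance : BorelSpace ℚ_[p] := ⟨rfl⟩

end PadicSub

/-!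
The `n`-th roots of `t ∈ P_n` form one coset `z μ_n` of the group of `n`-th roots of unity,
and it suffices to pick one of them semialgebraically. Put `N = n φ(p²)`. A root of unity `ζ`
satisfies `ζ ^ φ(p²) ≡ 1 mod p²`, and the ball `‖z - 1‖ < p⁻¹` contains no nontrivial root of
unity, so `ζ ^ φ(p²) = 1`; hence `μ_n ∩ P_N = 1`. By Hensel's lemma `P_N` has finite index in
`ℚ_p^×`. Finitely many cosets `c_i⁻¹ P_N` therefore contain exactly one element of every coset
of `μ_n`, and the graph of the selected root is the semialgebraic set
`⋃ i, {(t, z) | z ^ n = t, c_i z ∈ P_N}`.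
-/

section Ultrametric

variable {K : Type*} [NormedField K] [IsUltrametricDist K]

theorem IsUltrametricDist.norm_le_one_of_norm_sub_one_le_one {z : K} (hz : ‖z - 1‖ ≤ 1) :
    ‖z‖ ≤ 1 := by
  simpa using (norm_add_one_le_max_norm_one (z - 1)).trans (max_le hz le_rfl)

open Finset in
theorem IsUltrametricDist.norm_pow_sub_one_le {z : K} (hz : ‖z‖ ≤ 1) (m : ℕ) :
    ‖z ^ m - 1‖ ≤ ‖z - 1‖ := by
  rw [← geom_sum_mul, norm_mul]
  refine mul_le_of_le_one_left (norm_nonneg _) ?_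
  exact norm_sum_le_of_forall_le_of_nonneg zero_le_one fun i _ => by
    rw [norm_pow]; exact pow_le_one₀ (norm_nonneg _) hz

open Finset in
theorem IsUltrametricDist.eq_one_of_pow_eq_one_of_norm_sub_one_lt {z : K} {m : ℕ}
    (hz : ‖z - 1‖ < ‖(m : K)‖) (hzm : z ^ m = 1) : z = 1 := by
  have hz1 : ‖z‖ ≤ 1 :=
    norm_le_one_of_norm_sub_one_le_one (hz.le.trans (norm_natCast_le_one K m))
  have hsum : ‖∑ i ∈ range m, z ^ i - m‖ < ‖(m : K)‖ := by
    have : ∑ i ∈ range m, z ^ i - m = ∑ i ∈ range m, (z ^ i - 1) := by simp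
    rw [this]
    exact (norm_sum_le_of_forall_le_of_nonneg (norm_nonneg _)
      fun i _ => norm_pow_sub_one_le hz1 i).trans_lt hz
  have hS : ∑ i ∈ range m, z ^ i ≠ 0 := fun h => by simp [h] at hsum
  have := geom_sum_mul z m
  rwa [hzm, sub_self, mul_eq_zero, or_iff_right hS, sub_eq_zero] at this

end Ultrametric

section Group

variable {G : Type*} [CommGroup G]

theorem disjoint_ker_powMonoidHom_range_powMonoidHom {n e : ℕ}
    (he : ∀ g : G, IsOfFinOrder g → g ^ e = 1) :
    Disjoint (powMonoidHom n : G →* G).ker (powMonoidHom (n * e) : G →* G).range := by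
  rw [Subgroup.disjoint_def]
  rintro _ hζ ⟨y, rfl⟩
  simp only [MonoidHom.mem_ker, powMonoidHom_apply] at hζ ⊢
  rcases Nat.eq_zero_or_pos (n * e) with h0 | hpos
  · rw [h0, pow_zero]
  · have hy : y ^ e = 1 := he y (isOfFinOrder_iff_pow_eq_one.mpr
      ⟨n * e * n, Nat.mul_pos hpos (Nat.pos_of_mul_pos_right hpos), by rw [pow_mul, hζ]⟩)
    rw [mul_comm, pow_mul, hy, one_pow]

theorem Subgroup.exists_unique_inv_mul_mem_and_exists_mul_mem {T H : Subgroup G}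
    [H.FiniteIndex] (hTH : Disjoint T H) :
    ∃ (r : ℕ) (c : Fin r → G), ∀ g : G, ∃! z : G, g⁻¹ * z ∈ T ∧ ∃ i, c i * z ∈ H := by
  -- Modulo `T ⊔ H` each `g` has a chosen representative, which pins down `z` modulo `H`;
  -- `T ∩ H = 1` then makes `z` unique in `g T`.
  have : (T ⊔ H).FiniteIndex := finiteIndex_of_le le_sup_right
  set e := (Finite.equivFin (G ⧸ (T ⊔ H))).symm
  have hclass : ∀ {i z}, (e i).out⁻¹ * z ∈ T ⊔ H ↔ e i = z := by
    intro i z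
    rw [← QuotientGroup.eq, QuotientGroup.out_eq']
  refine ⟨_, fun i => (e i).out⁻¹, fun g => ?_⟩
  set i₀ := e.symm g
  obtain ⟨t, ht, h, hh, hth⟩ := mem_sup.mp (hclass.mpr (e.apply_symm_apply (g : G ⧸ (T ⊔ H))))
  have hcz : (e i₀).out⁻¹ * (g * t⁻¹) ∈ H := by
    rwa [← mul_assoc, ← hth, mul_comm t, mul_inv_cancel_right]
  refine ⟨g * t⁻¹, ⟨by simpa using T.inv_mem ht, i₀, hcz⟩, ?_⟩
  rintro z ⟨hzT, i, hzH⟩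
  obtain rfl : i = i₀ := by
    rw [← e.symm_apply_apply i, (hclass.mp (mem_sup_right hzH)).trans
      (QuotientGroup.eq.mpr (mem_sup_left hzT)).symm]
  have hT : (g * t⁻¹)⁻¹ * z ∈ T := by
    convert T.mul_mem ht hzT using 1; group
  have hH : (g * t⁻¹)⁻¹ * z ∈ H := by
    convert H.mul_mem (H.inv_mem hcz) hzH using 1; group
  exact (inv_mul_eq_one.mp (disjoint_def.mp hTH hT hH)).symm

end Group

theorem exists_forall_and_eq_iff_of_existsUnique {α β : Type*} [Nonempty β] {X : Set α}
    {R : α → β → Prop} (hR : ∀ x ∈ X, ∃! y, R x y) (hRX : ∀ x y, R x y → x ∈ X) :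
    ∃ h : α → β, ∀ x y, (x ∈ X ∧ h x = y) ↔ R x y := by
  have : ∀ x, ∃ y, x ∈ X → R x y := fun x => by
    by_cases hx : x ∈ X
    · exact (hR x hx).exists.imp fun y hy _ => hy
    · exact ⟨Classical.arbitrary β, fun h => absurd h hx⟩
  choose h hh using this
  refine ⟨h, fun x y => ⟨?_, fun hxy => ⟨hRX x y hxy, ?_⟩⟩⟩
  · rintro ⟨hx, rfl⟩
    exact hh x hx
  · exact (hR x (hRX x y hxy)).unique (hh x (hRX x y hxy)) hxy

namespace PadicInt

variable {p : ℕ} [Fact p.Prime]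

open Nat in
theorem norm_pow_totient_sub_one_le (u : ℤ_[p]ˣ) (k : ℕ) :
    ‖(u : ℤ_[p]) ^ φ (p ^ k) - 1‖ ≤ (p : ℝ) ^ (-k : ℤ) := by
  rw [norm_le_pow_iff_mem_span_pow, ← ker_toZModPow, RingHom.mem_ker, map_sub, map_one,
    sub_eq_zero, map_pow]
  exact congrArg Units.val (ZMod.pow_totient (Units.map (toZModPow k).toMonoidHom u))

theorem exists_pow_eq_of_norm_sub_one_lt {N : ℕ} {w : ℤ_[p]}
    (hw : ‖w - 1‖ < ‖(N : ℤ_[p])‖ ^ 2) : ∃ y : ℤ_[p], y ^ N = w := by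
  let F : Polynomial ℤ_[p] := .X ^ N - .C w
  have hF : ‖F.aeval (1 : ℤ_[p])‖ < ‖F.derivative.aeval (1 : ℤ_[p])‖ ^ 2 := by
    simpa only [F, Polynomial.aeval_def, Polynomial.eval₂_sub, Polynomial.eval₂_X_pow,
      Polynomial.eval₂_C, Polynomial.derivative_sub, Polynomial.derivative_C,
      Polynomial.derivative_X_pow, sub_zero, Polynomial.eval₂_mul, one_pow, mul_one,
      Algebra.algebraMap_self, RingHom.id_apply, norm_sub_rev (1 : ℤ_[p]),
      Polynomial.eval₂_natCast] using hw
  obtain ⟨y, hy, -⟩ := hensels_lemma hF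
  refine ⟨y, ?_⟩
  simpa only [F, Polynomial.aeval_def, Polynomial.eval₂_sub, Polynomial.eval₂_X_pow,
      Polynomial.eval₂_C, Algebra.algebraMap_self, RingHom.id_apply, sub_eq_zero] using hy

end PadicInt

namespace Padic

variable {p : ℕ} [hp : Fact p.Prime]

theorem eq_one_of_pow_eq_one {z : ℚ_[p]} (hz : ‖z - 1‖ < (p : ℝ)⁻¹) {m : ℕ} (hm : m ≠ 0)
    (hzm : z ^ m = 1) : z = 1 := by
  have hp1 : (p : ℝ)⁻¹ < 1 := inv_lt_one_of_one_lt₀ (by exact_mod_cast hp.out.one_lt)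
  induction m using Nat.strong_induction_on generalizing z with
  | _ m ih =>
    by_cases hpm : p ∣ m
    · obtain ⟨k, rfl⟩ := hpm
      have hz1 := IsUltrametricDist.norm_le_one_of_norm_sub_one_le_one (hz.trans hp1).le
      have hk : k ≠ 0 := right_ne_zero_of_mul hm
      have hzp : z ^ p = 1 :=
        ih k (lt_mul_left (Nat.pos_of_ne_zero hk) hp.out.one_lt)
          ((IsUltrametricDist.norm_pow_sub_one_le hz1 p).trans_lt hz) hk (by rw [← pow_mul, hzm])
      refine IsUltrametricDist.eq_one_of_pow_eq_one_of_norm_sub_one_lt ?_ hzp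
      rwa [norm_p]
    · refine IsUltrametricDist.eq_one_of_pow_eq_one_of_norm_sub_one_lt ?_ hzm
      rw [norm_natCast_eq_one_iff.mpr ((Nat.Prime.coprime_iff_not_dvd hp.out).mpr hpm)]
      exact hz.trans hp1

open Nat in
theorem pow_totient_eq_one_of_isOfFinOrder {z : ℚ_[p]ˣ} (hz : IsOfFinOrder z) :
    z ^ φ (p ^ 2) = 1 := by
  obtain ⟨m, hm, hzm⟩ := isOfFinOrder_iff_pow_eq_one.mp hz
  have hzm' : (z : ℚ_[p]) ^ m = 1 := by rw [← Units.val_pow_eq_pow_val, hzm, Units.val_one]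
  have hnorm : ‖(z : ℚ_[p])‖ = 1 := (pow_eq_one_iff_of_nonneg (norm_nonneg _) hm.ne').mp
    (by rw [← norm_pow, hzm', norm_one])
  have hball : ‖(z : ℚ_[p]) ^ φ (p ^ 2) - 1‖ < (p : ℝ)⁻¹ := by
    have := (PadicInt.norm_le_pow_iff_norm_lt_pow_add_one _ _).mp
      (PadicInt.norm_pow_totient_sub_one_le (PadicInt.mkUnits hnorm) 2)
    rw [PadicInt.norm_def] at this
    push_cast [PadicInt.mkUnits_eq] at this
    norm_num at this
    exact this
  apply Units.ext
  push_cast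
  exact eq_one_of_pow_eq_one hball hm.ne' (by rw [← pow_mul, mul_comm, pow_mul, hzm', one_pow])

theorem exists_eq_natCast_mul_pow {N : ℕ} (hN : N ≠ 0) :
    ∃ K : ℕ, ∀ u : ℚ_[p], ‖u‖ = 1 → ∃ a : Fin (p ^ K), ∃ y : ℚ_[p], u = a * y ^ N := by
  have hN1 : ‖(N : ℚ_[p])‖ ^ 2 ≤ 1 :=
    pow_le_one₀ (norm_nonneg _) (IsUltrametricDist.norm_natCast_le_one ℚ_[p] N)
  obtain ⟨K, hK⟩ := exists_pow_lt_of_lt_one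
    (pow_pos (norm_pos_iff.mpr (Nat.cast_ne_zero.mpr hN : (N : ℚ_[p]) ≠ 0)) 2)
    (inv_lt_one_of_one_lt₀ (by exact_mod_cast hp.out.one_lt : (1 : ℝ) < p))
  refine ⟨K, fun u hu => ?_⟩
  -- `p ^ (-K) < ‖N‖ ^ 2` is the radius of Hensel's lemma for `X ^ N - w` at `1`.
  let a := PadicInt.appr ⟨u, hu.le⟩ K
  have hua : ‖u - a‖ < ‖(N : ℚ_[p])‖ ^ 2 := by
    have := (PadicInt.norm_le_pow_iff_mem_span_pow _ K).mpr (PadicInt.appr_spec K ⟨u, hu.le⟩)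
    rw [PadicInt.norm_def] at this
    refine this.trans_lt ?_
    simpa [zpow_neg, inv_pow] using hK
  have ha : ‖(a : ℚ_[p])‖ = 1 := by
    have hne : ‖u‖ ≠ ‖(a : ℚ_[p]) - u‖ := by
      rw [hu, norm_sub_rev]; exact (hua.trans_le hN1).ne'
    rw [← add_sub_cancel u (a : ℚ_[p]), IsUltrametricDist.norm_add_eq_max_of_norm_ne_norm hne,
      hu, max_eq_left (norm_sub_rev u (a : ℚ_[p]) ▸ (hua.trans_le hN1).le)]
  have ha0 : (a : ℚ_[p]) ≠ 0 := norm_ne_zero_iff.mp (ha ▸ one_ne_zero)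
  have hw : ‖u / (a : ℚ_[p]) - 1‖ < ‖(N : ℚ_[p])‖ ^ 2 := by
    rwa [← div_self ha0, ← sub_div, norm_div, ha, div_one]
  have hw1 : ‖u / (a : ℚ_[p])‖ = 1 := by rw [norm_div, hu, ha, div_one]
  obtain ⟨y, hy⟩ := PadicInt.exists_pow_eq_of_norm_sub_one_lt (N := N)
    (w := ⟨u / (a : ℚ_[p]), hw1.le⟩) (by rw [PadicInt.norm_def]; exact_mod_cast hw)
  refine ⟨⟨a, PadicInt.appr_lt _ K⟩, y, ?_⟩
  have hy' : (y : ℚ_[p]) ^ N = u / (a : ℚ_[p]) := by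
    exact_mod_cast congrArg ((↑) : ℤ_[p] → ℚ_[p]) hy
  rw [hy', mul_div_cancel₀ _ ha0]

theorem exists_eq_pow_mul_natCast_mul_pow {N : ℕ} (hN : N ≠ 0) :
    ∃ K : ℕ, ∀ x : ℚ_[p], x ≠ 0 →
      ∃ (r : Fin N) (a : Fin (p ^ K)) (y : ℚ_[p]), x = p ^ (r : ℕ) * a * y ^ N := by
  obtain ⟨K, hK⟩ := exists_eq_natCast_mul_pow (p := p) hN
  refine ⟨K, fun x hx => ?_⟩
  have hp0 : (p : ℚ_[p]) ≠ 0 := Nat.cast_ne_zero.mpr hp.out.ne_zero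
  set v := x.valuation
  have hu : ‖x * (p : ℚ_[p]) ^ (-v)‖ = 1 := by
    rw [norm_mul, Padic.norm_eq_zpow_neg_valuation hx, Padic.norm_p_zpow, neg_neg,
      ← zpow_add₀ (by exact_mod_cast hp.out.ne_zero), neg_add_cancel, zpow_zero]
  obtain ⟨a, y, hay⟩ := hK _ hu
  have hNz : (0 : ℤ) < N := by exact_mod_cast Nat.pos_of_ne_zero hN
  have hr : (v % N).toNat < N := by
    have := Int.emod_lt_of_pos v hNz; have := Int.emod_nonneg v hNz.ne'; omega
  refine ⟨⟨_, hr⟩, a, p ^ (v / N) * y, ?_⟩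
  have hv : v = (v % N).toNat + N * (v / N) := by
    rw [Int.toNat_of_nonneg (Int.emod_nonneg v hNz.ne'), Int.emod_add_mul_ediv]
  calc x = (p : ℚ_[p]) ^ v * (x * (p : ℚ_[p]) ^ (-v)) := by
        rw [mul_left_comm, ← zpow_add₀ hp0, add_neg_cancel, zpow_zero, mul_one]
    _ = _ := by
        rw [hay, mul_pow, ← zpow_natCast ((p : ℚ_[p]) ^ (v / N)) N, ← zpow_mul]
        nth_rw 1 [hv]
        rw [zpow_add₀ hp0, zpow_natCast, mul_comm (v / (N : ℤ))]
        ring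

theorem finiteIndex_range_powMonoidHom {N : ℕ} (hN : N ≠ 0) :
    (powMonoidHom N : ℚ_[p]ˣ →* ℚ_[p]ˣ).range.FiniteIndex := by
  classical
  obtain ⟨K, hK⟩ := exists_eq_pow_mul_natCast_mul_pow (p := p) hN
  let c : Fin N × Fin (p ^ K) → ℚ_[p] := fun ra => p ^ (ra.1 : ℕ) * ra.2
  let cls : Fin N × Fin (p ^ K) → ℚ_[p]ˣ ⧸ (powMonoidHom N : ℚ_[p]ˣ →* ℚ_[p]ˣ).range :=
    fun ra => if h : c ra = 0 then 1 else Units.mk0 _ h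
  have : Finite (ℚ_[p]ˣ ⧸ (powMonoidHom N : ℚ_[p]ˣ →* ℚ_[p]ˣ).range) := by
    refine Finite.of_surjective cls fun q => ?_
    obtain ⟨x, rfl⟩ := QuotientGroup.mk_surjective q
    obtain ⟨r, a, y, hx⟩ := hK x x.ne_zero
    have hx0 : c (r, a) * y ^ N ≠ 0 := hx ▸ x.ne_zero
    have hc : c (r, a) ≠ 0 := left_ne_zero_of_mul hx0
    have hy : y ≠ 0 := fun h => hx0 (by simp [h, hN])
    refine ⟨(r, a), ?_⟩
    simp only [cls, dif_neg hc]
    refine QuotientGroup.eq.mpr (MonoidHom.mem_range.mpr ⟨Units.mk0 y hy, Units.ext ?_⟩)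
    change y ^ N = (c (r, a))⁻¹ * x
    rw [hx, inv_mul_cancel_left₀ hc]
  exact Subgroup.finiteIndex_of_finite_quotient

end Padic

namespace PadicSub

variable {p : ℕ} [Fact p.Prime]

theorem ne_zero_of_mem_Pset {N : ℕ} {x : ℚ_[p]} (hx : x ∈ Pset p N) : x ≠ 0 := by
  obtain ⟨y, hy, rfl⟩ := hx
  exact pow_ne_zero N hy

theorem val_mem_Pset_iff {N : ℕ} (w : ℚ_[p]ˣ) :
    (w : ℚ_[p]) ∈ Pset p N ↔ w ∈ (powMonoidHom N : ℚ_[p]ˣ →* ℚ_[p]ˣ).range := by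
  constructor
  · rintro ⟨y, hy, hyw⟩
    exact ⟨Units.mk0 y hy, Units.ext (by simpa using hyw)⟩
  · rintro ⟨y, rfl⟩
    exact ⟨y, y.ne_zero, by simp⟩

theorem isSemialgebraic_setOf_exists_eval_eq_zero_and_eval_mem_Pset {m r N : ℕ} (hN : 0 < N)
    (f g : Fin r → MvPolynomial (Fin m) ℚ_[p]) :
    IsSemialgebraic p {x | ∃ i, MvPolynomial.eval x (f i) = 0 ∧
      MvPolynomial.eval x (g i) ∈ Pset p N} := by
  refine ⟨r, 2, fun i => ![{x | MvPolynomial.eval x (f i) = 0},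
    {x | MvPolynomial.eval x (g i) ∈ Pset p N}], fun i j => ?_, ?_⟩
  · fin_cases j
    · exact Or.inl ⟨f i, rfl⟩
    · exact Or.inr ⟨g i, N, hN, rfl⟩
  · ext x
    simp [Fin.forall_fin_two]

theorem exists_existsUnique_pow_eq_and_mul_mem_Pset {n : ℕ} (hn : n ≠ 0) :
    ∃ N, 0 < N ∧ ∃ (r : ℕ) (c : Fin r → ℚ_[p]),
      ∀ t ∈ Pset p n, ∃! z, z ^ n = t ∧ ∃ i, c i * z ∈ Pset p N := by
  have hN : n * Nat.totient (p ^ 2) ≠ 0 :=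
    mul_ne_zero hn (Nat.totient_pos.mpr (pow_pos (Fact.out : p.Prime).pos 2)).ne'
  have := Padic.finiteIndex_range_powMonoidHom (p := p) hN
  obtain ⟨r, c, hc⟩ := Subgroup.exists_unique_inv_mul_mem_and_exists_mul_mem
    (disjoint_ker_powMonoidHom_range_powMonoidHom (n := n)
      fun _ => Padic.pow_totient_eq_one_of_isOfFinOrder (p := p))
  refine ⟨_, Nat.pos_of_ne_zero hN, r, fun i => c i, ?_⟩
  rintro _ ⟨y, hy, rfl⟩
  have hT : ∀ z : ℚ_[p]ˣ, (Units.mk0 y hy)⁻¹ * z ∈ (powMonoidHom n : ℚ_[p]ˣ →* ℚ_[p]ˣ).ker ↔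
      (z : ℚ_[p]) ^ n = y ^ n := by
    intro z
    rw [MonoidHom.mem_ker, powMonoidHom_apply, mul_pow, inv_pow, inv_mul_eq_one, eq_comm,
      Units.ext_iff]
    simp
  obtain ⟨z, ⟨hzT, i, hzH⟩, hz⟩ := hc (Units.mk0 y hy)
  refine ⟨z, ⟨(hT z).mp hzT, i, by simpa using (val_mem_Pset_iff _).mpr hzH⟩, ?_⟩
  rintro z' ⟨hz'n, j, hz'⟩
  have hz'0 : z' ≠ 0 := right_ne_zero_of_mul (ne_zero_of_mem_Pset hz')
  have := hz (Units.mk0 z' hz'0)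
    ⟨(hT _).mpr hz'n, j, (val_mem_Pset_iff _).mp (by simpa using hz')⟩
  simpa using congrArg Units.val this

end PadicSub

open PadicSub in
/-- For every `n > 0` there is a semialgebraic function `h : P_n → ℚ_p` with
`|h(t)| = |t|^{1/n}` for every `t ∈ P_n` (used in the proof of Theorem 3.1 of the paper). -/
theorem exists_semialgebraic_nth_root_of_norm
    (p : ℕ) [Fact p.Prime] (n : ℕ) (hn : 0 < n) :
    ∃ h : ℚ_[p] → ℚ_[p], IsSemialgebraicFnOn1 p (Pset p n) h ∧
      ∀ t ∈ Pset p n, ‖h t‖ = ‖t‖ ^ ((n : ℝ)⁻¹) := by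
  obtain ⟨N, hN, r, c, hc⟩ := exists_existsUnique_pow_eq_and_mul_mem_Pset (p := p) hn.ne'
  obtain ⟨h, hh⟩ := exists_forall_and_eq_iff_of_existsUnique hc fun t z ⟨hzt, i, hz⟩ =>
    ⟨z, right_ne_zero_of_mul (ne_zero_of_mem_Pset hz), hzt⟩
  refine ⟨h, ?_, fun t ht => ?_⟩
  · have hgraph : {z : Fin 2 → ℚ_[p] | z 0 ∈ Pset p n ∧ h (z 0) = z 1} =
        {z | ∃ i, MvPolynomial.eval z (.X 1 ^ n - .X 0) = 0 ∧
          MvPolynomial.eval z (.C (c i) * .X 1) ∈ Pset p N} := by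
      ext z
      simp [hh, sub_eq_zero]
    rw [IsSemialgebraicFnOn1, hgraph]
    exact isSemialgebraic_setOf_exists_eval_eq_zero_and_eval_mem_Pset hN _ _
  · have hnorm : ‖h t‖ ^ n = ‖t‖ := by rw [← norm_pow, ((hh t (h t)).mp ⟨ht, rfl⟩).1]
    rw [← hnorm, Real.pow_rpow_inv_natCast (norm_nonneg _) hn.ne']
end

section
/- Let μ ∈ ℚ_p^×, let n > 0 be an integer, and for k ∈ ℤ let S_k = {u ∈ μP_n : v(u) = k}. Then S_k is nonempty if and only if k ≡ v(μ) (mod n), and for any integers k, s both congruent to v(μ) modulo n, the Haar measure of S_k equals p^{s−k} times the Haar measure of S_s. -/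
open Filter MeasureTheory
open scoped ENNReal

/-!
Multiplication by `y ^ n` (`y ≠ 0`) preserves the coset `μ P_n` and shifts valuations by
`n v(y)`, so it carries the fiber `S_k` onto `S_{k + n v(y)}`; in particular all fibers with
`k ≡ v(μ) (mod n)` are translates of `S_{v(μ)} ∋ μ` under multiplication by powers of `p`.
Multiplication by `c ≠ 0` scales Haar measure on `ℚ_p` by `‖c‖`: this holds for units of
`ℤ_p`, which preserve `ℤ_p`, and for `p`, because `ℤ_p` is the disjoint union of the `p`
cosets of its maximal ideal `pℤ_p`.
-/

open MeasureTheory Measure IsLocalRing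
open scoped NNReal ENNReal Pointwise

namespace PadicInt

variable {p : ℕ} [Fact p.Prime]

theorem index_maximalIdeal : (maximalIdeal ℤ_[p]).toAddSubgroup.index = p := by
  rw [AddSubgroup.index_eq_card]
  exact (Nat.card_congr residueField.toEquiv).trans (Nat.card_zmod p)

theorem coe_maximalIdeal : (maximalIdeal ℤ_[p] : Set ℤ_[p]) = {x | ‖x‖ < 1} := by
  ext x
  exact mem_nonunits

theorem image_coe_maximalIdeal :
    ((↑) : ℤ_[p] → ℚ_[p]) '' (maximalIdeal ℤ_[p] : Set ℤ_[p]) = Metric.ball 0 1 := by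
  rw [coe_maximalIdeal]
  ext x
  rw [mem_ball_zero_iff]
  exact ⟨fun ⟨y, hy, hyx⟩ => hyx ▸ hy, fun hx => ⟨⟨x, hx.le⟩, hx, rfl⟩⟩

theorem range_coe : Set.range ((↑) : ℤ_[p] → ℚ_[p]) = Metric.closedBall 0 1 := by
  ext x
  rw [mem_closedBall_zero_iff]
  exact ⟨fun ⟨y, hyx⟩ => hyx ▸ y.2, fun hx => ⟨⟨x, hx⟩, rfl⟩⟩

end PadicInt

namespace Padic

variable {p : ℕ} [Fact p.Prime]

theorem natCast_mul_addHaar_ball_zero_one (ν : Measure ℚ_[p]) [ν.IsAddHaarMeasure] :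
    p * ν (Metric.ball 0 1) = ν (Metric.closedBall 0 1) := by
  let _ : MeasurableSpace ℤ_[p] := Subtype.instMeasurableSpace
  have : BorelSpace ℤ_[p] := Subtype.borelSpace _
  have : (maximalIdeal ℤ_[p]).toAddSubgroup.FiniteIndex :=
    ⟨by rw [PadicInt.index_maximalIdeal]; exact (Fact.out : p.Prime).ne_zero⟩
  let ι : ℤ_[p] →+ ℚ_[p] := PadicInt.Coe.ringHom.toAddMonoidHom
  have hι : MeasurableEmbedding ι := PadicInt.isOpenEmbedding_coe.measurableEmbedding
  have := IsAddLeftInvariant.comap ν hι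
  have hopen : IsOpen (maximalIdeal ℤ_[p] : Set ℤ_[p]) := by
    rw [PadicInt.coe_maximalIdeal]
    exact isOpen_lt continuous_norm continuous_const
  have key := AddSubgroup.index_mul_measure (maximalIdeal ℤ_[p]).toAddSubgroup
    hopen.measurableSet (ν.comap ι)
  rw [PadicInt.index_maximalIdeal, hι.comap_apply, hι.comap_apply, Set.image_univ] at key
  convert key using 3
  · exact PadicInt.image_coe_maximalIdeal.symm
  · exact PadicInt.range_coe.symm

theorem natCast_smul_closedBall_zero_one :
    (p : ℚ_[p]) • Metric.closedBall (0 : ℚ_[p]) 1 = Metric.ball 0 1 := by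
  have hp : (0 : ℝ) < p := by exact_mod_cast (Fact.out : p.Prime).pos
  ext x
  have h := norm_le_pow_iff_norm_lt_pow_add_one x (-1)
  rw [neg_add_cancel, zpow_zero, zpow_neg_one] at h
  rw [Set.mem_smul_set_iff_inv_smul_mem₀ (by exact_mod_cast hp.ne'), mem_closedBall_zero_iff,
    smul_eq_mul, norm_mul, norm_inv, norm_p, inv_inv, mem_ball_zero_iff, ← h,
    ← le_div_iff₀' hp, one_div]

theorem distribHaarChar_of_norm_eq_one {u : ℚ_[p]ˣ} (hu : ‖(u : ℚ_[p])‖ = 1) :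
    distribHaarChar ℚ_[p] u = 1 := by
  have hB : u • Metric.closedBall (0 : ℚ_[p]) 1 = Metric.closedBall 0 1 := by
    change (u : ℚ_[p]) • Metric.closedBall (0 : ℚ_[p]) 1 = _
    rw [smul_closedBall' u.ne_zero, hu, smul_zero, mul_one]
  refine distribHaarChar_eq_of_measure_smul_eq_mul (μ := (addHaar : Measure ℚ_[p]))
    (Metric.measure_closedBall_pos _ (0 : ℚ_[p]) one_pos).ne' measure_closedBall_lt_top.ne ?_
  rw [hB, ENNReal.coe_one, one_mul]

theorem distribHaarChar_mk0_natCast (hp : (p : ℚ_[p]) ≠ 0) :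
    distribHaarChar ℚ_[p] (Units.mk0 (p : ℚ_[p]) hp) = (p : ℝ≥0)⁻¹ := by
  have hB : Units.mk0 (p : ℚ_[p]) hp • Metric.closedBall (0 : ℚ_[p]) 1 = Metric.ball 0 1 :=
    natCast_smul_closedBall_zero_one
  refine distribHaarChar_eq_of_measure_smul_eq_mul (μ := (addHaar : Measure ℚ_[p]))
    (Metric.measure_closedBall_pos _ (0 : ℚ_[p]) one_pos).ne' measure_closedBall_lt_top.ne ?_
  have hp' : (p : ℝ≥0) ≠ 0 := by exact_mod_cast (Fact.out : p.Prime).ne_zero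
  rw [hB, ← natCast_mul_addHaar_ball_zero_one, ← mul_assoc, ENNReal.coe_inv hp',
    ENNReal.coe_natCast, ENNReal.inv_mul_cancel (by exact_mod_cast hp') (ENNReal.natCast_ne_top p),
    one_mul]

theorem distribHaarChar_eq_nnnorm (u : ℚ_[p]ˣ) : distribHaarChar ℚ_[p] u = ‖(u : ℚ_[p])‖₊ := by
  have hp : (p : ℚ_[p]) ≠ 0 := by exact_mod_cast (Fact.out : p.Prime).ne_zero
  set π := Units.mk0 (p : ℚ_[p]) hp
  set v := (u : ℚ_[p]).valuation
  set w := π ^ (-v) * u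
  have hw : ‖(w : ℚ_[p])‖ = 1 := by
    have hpR : (p : ℝ) ≠ 0 := by exact_mod_cast (Fact.out : p.Prime).ne_zero
    rw [Units.val_mul, Units.val_zpow_eq_zpow_val, norm_mul, Units.val_mk0, norm_p_zpow,
      norm_eq_zpow_neg_valuation u.ne_zero, neg_neg, ← zpow_add₀ hpR, add_neg_cancel, zpow_zero]
  have hu : u = π ^ v * w := by simp [w]
  rw [hu, map_mul, map_zpow, distribHaarChar_mk0_natCast, distribHaarChar_of_norm_eq_one hw,
    mul_one]
  ext
  simp [π, hw]

theorem addHaar_smul (ν : Measure ℚ_[p]) [ν.IsAddHaarMeasure] {c : ℚ_[p]} (hc : c ≠ 0)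
    (s : Set ℚ_[p]) : ν (c • s) = ‖c‖ₑ * ν s := by
  have := distribHaarChar_mul ν (Units.mk0 c hc) s
  rw [distribHaarChar_eq_nnnorm] at this
  exact this.symm

theorem enorm_eq_zpow_neg_valuation {x : ℚ_[p]} (hx : x ≠ 0) :
    ‖x‖ₑ = (p : ℝ≥0∞) ^ (-x.valuation) := by
  have hp : (p : ℝ≥0) ≠ 0 := by exact_mod_cast (Fact.out : p.Prime).ne_zero
  have h : ‖x‖₊ = (p : ℝ≥0) ^ (-x.valuation) :=
    NNReal.eq (by simp [norm_eq_zpow_neg_valuation hx])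
  rw [enorm_eq_nnnorm, h, ENNReal.coe_zpow hp, ENNReal.coe_natCast]

end Padic

namespace PadicSub

variable {p : ℕ} [Fact p.Prime] {μ x y : ℚ_[p]} {n : ℕ}

theorem self_mem_cosetP : μ ∈ cosetP p μ n := ⟨1, ⟨1, one_ne_zero, one_pow n⟩, (mul_one μ).symm⟩

theorem ne_zero_of_mem_cosetP (hμ : μ ≠ 0) (hx : x ∈ cosetP p μ n) : x ≠ 0 := by
  obtain ⟨_, ⟨w, hw, rfl⟩, rfl⟩ := hx
  exact mul_ne_zero hμ (pow_ne_zero n hw)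

theorem valuation_modEq_of_mem_cosetP (hμ : μ ≠ 0) (hx : x ∈ cosetP p μ n) :
    x.valuation ≡ μ.valuation [ZMOD n] := by
  obtain ⟨_, ⟨w, hw, rfl⟩, rfl⟩ := hx
  rw [Padic.valuation_mul hμ (pow_ne_zero n hw), Padic.valuation_pow]
  exact Int.modEq_add_fac_self

theorem pow_mul_mem_cosetP_iff (hy : y ≠ 0) : y ^ n * x ∈ cosetP p μ n ↔ x ∈ cosetP p μ n := by
  constructor
  · rintro ⟨_, ⟨w, hw, rfl⟩, hx⟩
    refine ⟨(w / y) ^ n, ⟨w / y, div_ne_zero hw hy, rfl⟩, ?_⟩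
    rw [div_pow, mul_div_assoc', ← hx, mul_div_cancel_left₀ _ (pow_ne_zero n hy)]
  · rintro ⟨_, ⟨w, hw, rfl⟩, rfl⟩
    exact ⟨(y * w) ^ n, ⟨y * w, mul_ne_zero hy hw, rfl⟩, by ring⟩

theorem pow_smul_valuation_fiber (hμ : μ ≠ 0) (hy : y ≠ 0) (k : ℤ) :
    y ^ n • {u ∈ cosetP p μ n | u.valuation = k} =
      {u ∈ cosetP p μ n | u.valuation = k + n * y.valuation} := by
  ext x
  rw [Set.mem_smul_set_iff_inv_smul_mem₀ (pow_ne_zero n hy), smul_eq_mul, ← inv_pow]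
  simp only [Set.mem_sep_iff, pow_mul_mem_cosetP_iff (inv_ne_zero hy)]
  refine and_congr_right fun hx => ?_
  rw [Padic.valuation_mul (pow_ne_zero n (inv_ne_zero hy)) (ne_zero_of_mem_cosetP hμ hx),
    Padic.valuation_pow, Padic.valuation_inv]
  constructor <;> intro h <;> linarith

end PadicSub

open PadicSub MeasureTheory in
open scoped ENNReal in
theorem coset_valuation_fiber_measure_general
    (p : ℕ) [Fact p.Prime] (μ : ℚ_[p]) (hμ : μ ≠ 0) (n : ℕ)
    (ν : Measure ℚ_[p]) (hν : ν.IsAddHaarMeasure) :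
    (∀ k : ℤ, {u ∈ cosetP p μ n | u.valuation = k}.Nonempty ↔
      k ≡ μ.valuation [ZMOD (n : ℤ)]) ∧
    ∀ k s : ℤ, k ≡ μ.valuation [ZMOD (n : ℤ)] → s ≡ μ.valuation [ZMOD (n : ℤ)] →
      ν {u ∈ cosetP p μ n | u.valuation = k} =
        (p : ℝ≥0∞) ^ (s - k) * ν {u ∈ cosetP p μ n | u.valuation = s} := by
  have hp : ∀ e : ℤ, (p : ℚ_[p]) ^ e ≠ 0 := fun e =>
    zpow_ne_zero e (by exact_mod_cast (Fact.out : p.Prime).ne_zero)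
  have hval : ∀ e : ℤ, ((p : ℚ_[p]) ^ e).valuation = e := fun e => by
    rw [Padic.valuation_zpow, Padic.valuation_p, mul_one]
  refine ⟨fun k => ⟨?_, fun hk => ?_⟩, fun k s hk hs => ?_⟩
  · rintro ⟨x, hx, rfl⟩
    exact valuation_modEq_of_mem_cosetP hμ hx
  · obtain ⟨e, he⟩ := Int.modEq_iff_dvd.1 hk.symm
    rw [show k = μ.valuation + n * ((p : ℚ_[p]) ^ e).valuation by rw [hval]; linarith,
      ← pow_smul_valuation_fiber hμ (hp e)]
    exact Set.Nonempty.smul_set ⟨μ, self_mem_cosetP, rfl⟩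
  · obtain ⟨e, he⟩ := Int.modEq_iff_dvd.1 (hs.trans hk.symm)
    rw [show k = s + n * ((p : ℚ_[p]) ^ e).valuation by rw [hval]; linarith,
      ← pow_smul_valuation_fiber hμ (hp e), Padic.addHaar_smul ν (pow_ne_zero n (hp e)),
      Padic.enorm_eq_zpow_neg_valuation (pow_ne_zero n (hp e)), Padic.valuation_pow, hval]
    ring_nf

open PadicSub MeasureTheory in
open scoped ENNReal in
/-- The fibers `S_k = {u ∈ μP_n : v(u) = k}` of the valuation on a coset `μP_n`
(used in the proof of Theorem 4.3 of the paper): `S_k` is nonempty iff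
`k ≡ v(μ) (mod n)`, and for `k, s ≡ v(μ) (mod n)` the Haar measures satisfy
`measure S_k = p^{s-k} · measure S_s`. -/
theorem coset_valuation_fiber_measure
    (p : ℕ) [Fact p.Prime] (μ : ℚ_[p]) (hμ : μ ≠ 0) (n : ℕ) (hn : 0 < n)
    (ν : Measure ℚ_[p]) (hν : ν.IsAddHaarMeasure) (hν1 : ν {x : ℚ_[p] | ‖x‖ ≤ 1} = 1) :
    (∀ k : ℤ, {u ∈ cosetP p μ n | u.valuation = k}.Nonempty ↔
      k ≡ μ.valuation [ZMOD (n : ℤ)]) ∧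
    ∀ k s : ℤ, k ≡ μ.valuation [ZMOD (n : ℤ)] → s ≡ μ.valuation [ZMOD (n : ℤ)] →
      ν {u ∈ cosetP p μ n | u.valuation = k} =
        (p : ℝ≥0∞) ^ (s - k) * ν {u ∈ cosetP p μ n | u.valuation = s} :=
  coset_valuation_fiber_measure_general p μ hμ n ν hν
end
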